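/- arXiv:1311.4758 — 6 statements merged into one kernel-verified Lean document; each statement's English description precedes it below -/
import Mathlib

section
/- Let λ be a complex number on the unit circle, λ = e^{2πiθ}. In the noncommutative torus algebra generated by unitaries U, V with UV = λVU, set x̂ = U - U*, ŷ = V - V*, ẑ = UV* - U*V, and z = UV* + U*V. Then x̂² + ŷ² - λ̄ẑ² - x̂zŷ = 2(λ̄² - 1)·1. -/
/-!
With `u' = u⁻¹`, `v' = v⁻¹`, expanding `x̂ z ŷ` by unitarity alone gives
`x̂² + ŷ² - x̂ z ŷ = u²v'² + u'²v² - 2`. Commuting `v'` past `u` (resp. `v` past `u'`) costs a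
factor `q`, so `ẑ² = q (u²v'² + u'²v²) - 2 q⁻¹`, and multiplying by `q⁻¹` makes the quartic
terms cancel, leaving only scalars.
-/

section TwistedCommutation

variable {R A : Type*} [CommRing R] [Ring A] [Algebra R A] {q : R} {a a' b b' : A}

theorem inv_mul_eq_smul_mul_inv_of_mul_eq_smul (hb : b * b' = 1) (hb' : b' * b = 1)
    (h : a * b = q • (b * a)) : b' * a = q • (a * b') := by
  calc b' * a = b' * (a * b) * b' := by rw [mul_assoc b', mul_assoc a, hb, mul_one]
    _ = q • (b' * b * (a * b')) := by rw [h, mul_smul_comm, smul_mul_assoc]; noncomm_ring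
    _ = q • (a * b') := by rw [hb', one_mul]

theorem mul_inv_eq_smul_inv_mul_of_mul_eq_smul (ha : a * a' = 1) (ha' : a' * a = 1)
    (h : a * b = q • (b * a)) : b * a' = q • (a' * b) := by
  calc b * a' = a' * (a * b) * a' := by rw [mul_assoc, mul_assoc, ← mul_assoc a' a, ha', one_mul]
    _ = q • (a' * b * (a * a')) := by rw [h, mul_smul_comm, smul_mul_assoc]; noncomm_ring
    _ = q • (a' * b) := by rw [ha, mul_one]

theorem mul_sq_of_mul_eq_smul (h : b * a = q • (a * b)) :
    (a * b) ^ 2 = q • (a ^ 2 * b ^ 2) := by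
  calc (a * b) ^ 2 = a * (b * a) * b := by noncomm_ring
    _ = q • (a ^ 2 * b ^ 2) := by rw [h, mul_smul_comm, smul_mul_assoc]; noncomm_ring

end TwistedCommutation

section Unitary

variable {A : Type*} [Ring A] {u u' v v' : A}

theorem sub_sq_of_mul_eq_one (h : u * u' = 1) (h' : u' * u = 1) :
    (u - u') ^ 2 = u ^ 2 + u' ^ 2 - 2 := by
  calc (u - u') ^ 2 = u ^ 2 + u' ^ 2 - (u * u' + u' * u) := by noncomm_ring
    _ = u ^ 2 + u' ^ 2 - 2 := by rw [h, h', one_add_one_eq_two]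

theorem sub_mul_add_mul_sub_of_mul_eq_one (hu : u * u' = 1) (hu' : u' * u = 1)
    (hv : v * v' = 1) (hv' : v' * v = 1) :
    (u - u') * (u * v' + u' * v) * (v - v')
      = u ^ 2 + u' ^ 2 + v ^ 2 + v' ^ 2 - 2 - (u ^ 2 * v' ^ 2 + u' ^ 2 * v ^ 2) := by
  calc (u - u') * (u * v' + u' * v) * (v - v')
        = (u ^ 2 * v' + u * u' * v - u' * u * v' - u' ^ 2 * v) * (v - v') := by noncomm_ring
    _ = (u ^ 2 * v' + v - v' - u' ^ 2 * v) * (v - v') := by rw [hu, hu', one_mul, one_mul]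
    _ = u ^ 2 * (v' * v) - u ^ 2 * v' ^ 2 + v ^ 2 - (v * v' + v' * v) + v' ^ 2
          - u' ^ 2 * v ^ 2 + u' ^ 2 * (v * v') := by noncomm_ring
    _ = _ := by rw [hv, hv', one_add_one_eq_two]; noncomm_ring

end Unitary

section NoncommutativeTorus

variable {R A : Type*} [CommRing R] [Ring A] [Algebra R A] {q : R} {u u' v v' : A}

theorem smul_mul_sub_mul_sq_of_mul_eq_smul (hu : u * u' = 1) (hu' : u' * u = 1)
    (hv : v * v' = 1) (hv' : v' * v = 1) (huv : u * v = q • (v * u)) :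
    q • (u * v' - u' * v) ^ 2 = q ^ 2 • (u ^ 2 * v' ^ 2 + u' ^ 2 * v ^ 2) - 2 := by
  have hv'u := inv_mul_eq_smul_mul_inv_of_mul_eq_smul hv hv' huv
  have hvu' := mul_inv_eq_smul_inv_mul_of_mul_eq_smul hu hu' huv
  have cross₁ : q • (u * v' * (u' * v)) = 1 := by
    rw [← smul_mul_assoc, ← hv'u, mul_assoc, ← mul_assoc u, hu, one_mul, hv']
  have cross₂ : q • (u' * v * (u * v')) = 1 := by
    rw [mul_assoc, ← mul_assoc v, ← mul_smul_comm, ← smul_mul_assoc, ← huv, mul_assoc u, hv,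
      mul_one, hu']
  calc q • (u * v' - u' * v) ^ 2
      = q • (u * v') ^ 2 - q • (u * v' * (u' * v)) - q • (u' * v * (u * v'))
          + q • (u' * v) ^ 2 := by
        rw [← smul_sub, ← smul_sub, ← smul_add]; congr 1; noncomm_ring
    _ = _ := by
      rw [cross₁, cross₂, mul_sq_of_mul_eq_smul hv'u, mul_sq_of_mul_eq_smul hvu',
        ← one_add_one_eq_two (R := A)]
      module

theorem pillow_identity (hu : u * u' = 1) (hu' : u' * u = 1) (hv : v * v' = 1) (hv' : v' * v = 1)
    {c : R} (hcq : c * q = 1) (huv : u * v = q • (v * u)) :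
    (u - u') ^ 2 + (v - v') ^ 2 - c • (u * v' - u' * v) ^ 2
        - (u - u') * (u * v' + u' * v) * (v - v') = (2 * (c ^ 2 - 1)) • (1 : A) := by
  have hc : c • (u * v' - u' * v) ^ 2 = c ^ 2 • q • (u * v' - u' * v) ^ 2 := by
    rw [smul_smul, show c ^ 2 * q = c by linear_combination c * hcq]
  rw [sub_sq_of_mul_eq_one hu hu', sub_sq_of_mul_eq_one hv hv', hc,
    smul_mul_sub_mul_sq_of_mul_eq_smul hu hu' hv hv' huv, smul_sub, smul_smul, ← mul_pow, hcq,
    one_pow, one_smul, sub_mul_add_mul_sub_of_mul_eq_one hu hu' hv hv', ← one_add_one_eq_two (R := A)]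
  module

end NoncommutativeTorus

/-- In the noncommutative torus algebra generated by unitaries `U`, `V`
with `U*V = λ•(V*U)` for a unimodular `λ`, the elements `x̂ = U - U*`, `ŷ = V - V*`,
`ẑ = UV* - U*V` and `z = UV* + U*V` satisfy
`x̂² + ŷ² - λ̄•ẑ² - x̂*z*ŷ = 2(λ̄² - 1)•1`. -/
theorem noncommutative_pillow_identity
    (A : Type*) [Ring A] [Algebra ℂ A] [StarRing A]
    (lam : ℂ) (hlam : ‖lam‖ = 1)
    (U V : A)
    (hU : U * star U = 1) (hU' : star U * U = 1)
    (hV : V * star V = 1) (hV' : star V * V = 1)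
    (hUV : U * V = lam • (V * U)) :
    (U - star U) ^ 2 + (V - star V) ^ 2
      - (starRingEnd ℂ lam) • (U * star V - star U * V) ^ 2
      - (U - star U) * (U * star V + star U * V) * (V - star V)
    = (2 * ((starRingEnd ℂ lam) ^ 2 - 1)) • (1 : A) := by
  have hconj : starRingEnd ℂ lam * lam = 1 := by
    rw [Complex.conj_mul', hlam, Complex.ofReal_one, one_pow]
  exact pillow_identity hU hU' hV hV' hconj hUV
end

section
/- Let λ = e^{2πiθ} with θ irrational (so λ² ≠ 1). The involutive automorphism σ of the noncommutative torus O(T²_θ) defined by σ(U) = U*, σ(V) = V* gives a ℤ₂-grading, and this grading is strong: the product of the degree-1 part with itself equals the degree-0 part, i.e., A₁·A₁ = A₀. -/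
/-!
An automorphism `σ` is multiplicative, so the product of two `(-1)`-eigenvectors is fixed and
`A₀ A₁ ⊆ A₁`; hence `A₁ A₁ = A₀` as soon as `1 ∈ A₁ A₁`. For the noncommutative torus this
follows from an explicit identity writing a nonzero multiple of `1` as a combination of products
of the odd elements `U - U*`, `V - V*`, `UV* - U*V` and `(U - U*)(UV* + U*V)`.
-/

theorem Submodule.mul_eigenspace_neg_eq_of_one_mem {R A F : Type*} [CommRing R] [Ring A]
    [Algebra R A] [FunLike F A A] [MulHomClass F A A] (σ : F) (A₀ A₁ : Submodule R A)
    (hA₀ : ∀ x, x ∈ A₀ ↔ σ x = x) (hA₁ : ∀ x, x ∈ A₁ ↔ σ x = -x) (h1 : 1 ∈ A₁ * A₁) :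
    A₁ * A₁ = A₀ := by
  have hA₁A₁ : A₁ * A₁ ≤ A₀ := Submodule.mul_le.2 fun a ha b hb => by
    rw [hA₀, map_mul, (hA₁ a).1 ha, (hA₁ b).1 hb, neg_mul_neg]
  have hA₀A₁ : A₀ * A₁ ≤ A₁ := Submodule.mul_le.2 fun a ha b hb => by
    rw [hA₁, map_mul, (hA₀ a).1 ha, (hA₁ b).1 hb, mul_neg]
  refine le_antisymm hA₁A₁ fun a ha => ?_
  have : a * 1 ∈ A₀ * (A₁ * A₁) := Submodule.mul_mem_mul ha h1
  rw [mul_one, ← mul_assoc] at this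
  exact mul_le_mul_left hA₀A₁ _ this

theorem map_eq_of_mul_eq_one {M F : Type*} [Monoid M] [FunLike F M M] [MonoidHomClass F M M]
    (σ : F) {u u' : M} (h : u * u' = 1) (hσ : σ u = u') : σ u' = u :=
  (left_inv_eq_right_inv h (by rw [← map_one σ, ← h, map_mul, hσ])).symm

section QCommute

variable {K A : Type*} [Field K] [Ring A] [Algebra K A]

def QCommute (q : K) (a b : A) : Prop := a * b = q • (b * a)

variable {q : K} {a b : A}

theorem QCommute.symm (h : QCommute q a b) (hq : q ≠ 0) : QCommute q⁻¹ b a := by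
  rw [QCommute, h, smul_smul, inv_mul_cancel₀ hq, one_smul]

theorem QCommute.mul_mul (h : QCommute q a b) (w : A) : a * (b * w) = q • (b * (a * w)) := by
  rw [← mul_assoc, h, smul_mul_assoc, mul_assoc]

theorem QCommute.inv_left {a' : A} (h : QCommute q a b) (ha : a * a' = 1) (ha' : a' * a = 1) :
    QCommute q b a' :=
  calc b * a' = a' * (a * b) * a' := by rw [← mul_assoc, ha', one_mul]
    _ = q • (a' * b) := by rw [h, mul_smul_comm, smul_mul_assoc, mul_assoc, mul_assoc, ha, mul_one]

theorem QCommute.inv_right {b' : A} (h : QCommute q a b) (hb : b * b' = 1) (hb' : b' * b = 1) :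
    QCommute q b' a :=
  calc b' * a = b' * (a * b) * b' := by rw [mul_assoc, mul_assoc, hb, mul_one]
    _ = q • (a * b') := by rw [h, mul_smul_comm, smul_mul_assoc, ← mul_assoc b', hb', one_mul]

end QCommute

section Torus

variable {K A : Type*} [Field K] [Ring A] [Algebra K A] {lam : K} {U U' V V' : A}

/-- The identity `μ(ω(1)) = 1` of the paper, multiplied by `2(λ̄² - 1)`, where `λ̄ = λ⁻¹`. -/
theorem torus_identity (hU : U * U' = 1) (hU' : U' * U = 1) (hV : V * V' = 1)
    (hV' : V' * V = 1) (hUV : QCommute lam U V) (hlam : lam ≠ 0) :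
    (U - U') * (U - U') + (V - V') * (V - V')
      - lam⁻¹ • ((U * V' - U' * V) * (U * V' - U' * V))
      - (U - U') * (U * V' + U' * V) * (V - V') = (2 * (lam⁻¹ ^ 2 - 1)) • (1 : A) := by
  have hVU' : QCommute lam V U' := hUV.inv_left hU hU'
  have hV'U : QCommute lam V' U := hUV.inv_right hV hV'
  have hU'V' : QCommute lam U' V' := hV'U.inv_right hU hU'
  have cU (w : A) : U * (U' * w) = w := by rw [← mul_assoc, hU, one_mul]
  have cU' (w : A) : U' * (U * w) = w := by rw [← mul_assoc, hU', one_mul]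
  simp only [sub_mul, mul_sub, add_mul, mul_add, mul_assoc, mul_smul_comm, smul_smul, smul_sub,
    cU, cU', hU, hU', hV, hV', mul_one, (hUV.symm hlam).mul_mul, hVU'.mul_mul, hV'U.mul_mul,
    (hU'V'.symm hlam).mul_mul]
  match_scalars <;> field_simp <;> ring

theorem one_mem_mul_of_torus [NeZero (2 : K)] {F : Type*} [FunLike F A A] [RingHomClass F A A]
    (σ : F) (A₁ : Submodule K A) (hA₁ : ∀ x, x ∈ A₁ ↔ σ x = -x)
    (hU : U * U' = 1) (hU' : U' * U = 1) (hV : V * V' = 1) (hV' : V' * V = 1)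
    (hUV : QCommute lam U V) (hlam : lam ≠ 0) (hlam2 : lam ^ 2 ≠ 1)
    (hσU : σ U = U') (hσU' : σ U' = U) (hσV : σ V = V') (hσV' : σ V' = V) :
    1 ∈ A₁ * A₁ := by
  have hx : U - U' ∈ A₁ := (hA₁ _).2 (by rw [map_sub, hσU, hσU', neg_sub])
  have hy : V - V' ∈ A₁ := (hA₁ _).2 (by rw [map_sub, hσV, hσV', neg_sub])
  have hz : U * V' - U' * V ∈ A₁ :=
    (hA₁ _).2 (by rw [map_sub, map_mul, map_mul, hσU, hσU', hσV, hσV', neg_sub])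
  have hxz : (U - U') * (U * V' + U' * V) ∈ A₁ := by
    rw [hA₁, map_mul, (hA₁ _).1 hx, map_add, map_mul, map_mul, hσU, hσU', hσV, hσV', add_comm,
      neg_mul]
  have hc : (2 * (lam⁻¹ ^ 2 - 1) : K) ≠ 0 :=
    mul_ne_zero two_ne_zero (sub_ne_zero.2 (by rwa [inv_pow, inv_ne_one]))
  rw [← inv_smul_smul₀ hc (1 : A), ← torus_identity hU hU' hV hV' hUV hlam]
  exact Submodule.smul_mem _ _ <| sub_mem (sub_mem
    (add_mem (Submodule.mul_mem_mul hx hx) (Submodule.mul_mem_mul hy hy))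
    (Submodule.smul_mem _ _ (Submodule.mul_mem_mul hz hz))) (Submodule.mul_mem_mul hxz hy)

end Torus

theorem noncommutative_torus_strongly_graded_general
    (A : Type*) [Ring A] [Algebra ℂ A] [StarRing A]
    (lam : ℂ) (hlam : ‖lam‖ = 1) (hlam2 : lam ^ 2 ≠ 1)
    (U V : A)
    (hU : U * star U = 1) (hU' : star U * U = 1)
    (hV : V * star V = 1) (hV' : star V * V = 1)
    (hUV : U * V = lam • (V * U))
    (σ : A ≃ₐ[ℂ] A) (hσU : σ U = star U) (hσV : σ V = star V)
    (A₀ A₁ : Submodule ℂ A)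
    (hA₀ : ∀ x, x ∈ A₀ ↔ σ x = x)
    (hA₁ : ∀ x, x ∈ A₁ ↔ σ x = -x) :
    A₁ * A₁ = A₀ := by
  have hlam0 : lam ≠ 0 := by
    rintro rfl
    simp at hlam
  refine Submodule.mul_eigenspace_neg_eq_of_one_mem σ A₀ A₁ hA₀ hA₁ ?_
  exact one_mem_mul_of_torus σ A₁ hA₁ hU hU' hV hV' hUV hlam0 hlam2 hσU
    (map_eq_of_mul_eq_one σ hU hσU) hσV (map_eq_of_mul_eq_one σ hV hσV)

/-- For `λ = e^{2πiθ}` with `λ² ≠ 1`, the `ℤ₂`-grading of the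
noncommutative torus `O(T²_θ)` induced by the involutive automorphism `σ : U ↦ U*, V ↦ V*`
is strong: the product of the degree-one part with itself is the degree-zero part,
`A₁ · A₁ = A₀`. -/
theorem noncommutative_torus_strongly_graded
    (A : Type*) [Ring A] [Algebra ℂ A] [StarRing A]
    (lam : ℂ) (hlam : ‖lam‖ = 1) (hlam2 : lam ^ 2 ≠ 1)
    (U V : A)
    (hU : U * star U = 1) (hU' : star U * U = 1)
    (hV : V * star V = 1) (hV' : star V * V = 1)
    (hUV : U * V = lam • (V * U))
    (hgen : Algebra.adjoin ℂ ({U, V, star U, star V} : Set A) = ⊤)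
    (σ : A ≃ₐ[ℂ] A) (hσU : σ U = star U) (hσV : σ V = star V)
    (hσ2 : ∀ x, σ (σ x) = x)
    (A₀ A₁ : Submodule ℂ A)
    (hA₀ : ∀ x, x ∈ A₀ ↔ σ x = x)
    (hA₁ : ∀ x, x ∈ A₁ ↔ σ x = -x) :
    A₁ * A₁ = A₀ :=
  noncommutative_torus_strongly_graded_general A lam hlam hlam2 U V hU hU' hV hV' hUV σ hσU hσV A₀
    A₁ hA₀ hA₁
end

section
/- For q ∈ (0,1) and any integer l ≥ 1, there exist complex numbers x₁, y₁, ..., y_{l-1} such that in O(S³_q), x₁ α^{l-1}(α*)^{l-1} + Σ_{p=1}^{l-1} y_p (ββ*)^{p-1} α* α = 1. -/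
open Polynomial

lemma qsphere_aux_poly (q : ℝ) (hq : q ∈ Set.Ioo (0 : ℝ) 1) (m : ℕ) :
    ∃ (x₁ : ℂ) (y : ℕ → ℂ),
      C x₁ * (∏ j ∈ Finset.range m, (1 - C ((q:ℂ)^(2*j)) * X))
        + ∑ p ∈ Finset.Icc 1 m,
            C (y p) * (X^(p-1) * (1 - C ((q:ℂ)^(-2:ℤ)) * X)) = 1 := by
  have hq0 : (q:ℂ) ≠ 0 := by
    exact_mod_cast ne_of_gt hq.1
  have hq2 : ((q:ℂ)^2) ≠ 0 := pow_ne_zero _ hq0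
  have hinv : ((q:ℂ)^(-2:ℤ)) = ((q:ℂ)^2)⁻¹ := by
    rw [zpow_neg]; norm_cast
  rcases Nat.eq_zero_or_pos m with hm | hm
  · subst hm
    exact ⟨1, 0, by simp⟩
  set P : ℂ[X] := ∏ j ∈ Finset.range m, (1 - C ((q:ℂ)^(2*j)) * X) with hP
  have hPq : P.eval ((q:ℂ)^2) ≠ 0 := by
    rw [hP, eval_prod]
    refine Finset.prod_ne_zero_iff.mpr fun j _ => ?_
    have : eval ((q:ℂ)^2) (1 - C ((q:ℂ)^(2*j)) * X) = ((1 - q^(2*j+2) : ℝ) : ℂ) := by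
      simp; push_cast; ring
    rw [this]
    have : q^(2*j+2) < 1 := pow_lt_one₀ hq.1.le hq.2 (by omega)
    simp only [ne_eq, Complex.ofReal_eq_zero]
    linarith
  set x₁ : ℂ := (P.eval ((q:ℂ)^2))⁻¹ with hx₁
  set f : ℂ[X] := 1 - C x₁ * P with hf
  have hroot : f.IsRoot ((q:ℂ)^2) := by
    simp [hf, IsRoot, hx₁, inv_mul_cancel₀ hPq]
  obtain ⟨g, hg⟩ := dvd_iff_isRoot.mpr hroot
  have hdeg1 : ∀ j : ℕ, (1 - C ((q:ℂ)^(2*j)) * X).natDegree ≤ 1 := fun j => by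
    compute_degree
  have hdegP : P.natDegree ≤ m := by
    refine le_trans (natDegree_prod_le _ _) ?_
    have : ∑ j ∈ Finset.range m, (1 - C ((q:ℂ)^(2*j)) * X).natDegree
        ≤ ∑ _j ∈ Finset.range m, (1:ℕ) := Finset.sum_le_sum fun j _ => hdeg1 j
    simpa using this
  have hdegf : f.natDegree ≤ m := by
    refine le_trans (natDegree_sub_le _ _) (max_le (by simp) ?_)
    exact le_trans (natDegree_mul_le) (by simp [hdegP])
  have hdegg : g.natDegree < m := by
    by_cases hg0 : g = 0
    · simp [hg0, hm]
    · have hne : (X - C ((q:ℂ)^2)) ≠ 0 := X_sub_C_ne_zero _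
      have : f.natDegree = 1 + g.natDegree := by
        rw [hg, natDegree_mul hne hg0, natDegree_X_sub_C]
      omega
  refine ⟨x₁, fun p => -(q:ℂ)^2 * g.coeff (p-1), ?_⟩
  have hfac : ∀ k : ℕ, ∀ c : ℂ,
      C (-(q:ℂ)^2 * c) * (X^k * (1 - C ((q:ℂ)^(-2:ℤ)) * X))
        = C c * X^k * (X - C ((q:ℂ)^2)) := by
    intro k c
    rw [hinv]
    have hC1 : (C ((q:ℂ)^2) : ℂ[X]) * C (((q:ℂ)^2)⁻¹) = 1 := by
      rw [← C_mul, mul_inv_cancel₀ hq2, C_1]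
    simp only [C_mul, C_neg]
    linear_combination (C c * X^(k+1)) * hC1
  have hsum : ∑ p ∈ Finset.Icc 1 m,
      C (-(q:ℂ)^2 * g.coeff (p-1)) * (X^(p-1) * (1 - C ((q:ℂ)^(-2:ℤ)) * X))
      = g * (X - C ((q:ℂ)^2)) := by
    rw [show Finset.Icc 1 m = Finset.Ico 1 (m+1) from (Finset.Ico_add_one_right_eq_Icc 1 m).symm,
      Finset.sum_Ico_eq_sum_range]
    simp only [Nat.add_sub_cancel]
    calc ∑ i ∈ Finset.range (m + 1 - 1),
          C (-(q:ℂ)^2 * g.coeff (1 + i - 1)) * (X^(1 + i - 1) * (1 - C ((q:ℂ)^(-2:ℤ)) * X))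
        = ∑ i ∈ Finset.range m, C (g.coeff i) * X^i * (X - C ((q:ℂ)^2)) := by
          refine Finset.sum_congr (by simp) fun i _ => ?_
          have h1 : 1 + i - 1 = i := by omega
          rw [h1, hfac]
      _ = (∑ i ∈ Finset.range m, C (g.coeff i) * X^i) * (X - C ((q:ℂ)^2)) := by
          rw [Finset.sum_mul]
      _ = g * (X - C ((q:ℂ)^2)) := by
          simp only [C_mul_X_pow_eq_monomial]
          rw [← g.as_sum_range' m hdegg]
  rw [hsum]
  have : g * (X - C ((q:ℂ)^2)) = f := by rw [hg]; ring
  rw [this, hf]; ring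

/-- For `q ∈ (0,1)` and `l ≥ 1` there exist complex numbers
`x₁, y₁, …, y_{l-1}` such that in `O(S³_q)`
`x₁ α^{l-1}(α*)^{l-1} + Σ_{p=1}^{l-1} y_p (ββ*)^{p-1} α* α = 1`. -/
theorem quantum_sphere_partition_of_unity
    (q : ℝ) (hq : q ∈ Set.Ioo (0 : ℝ) 1) (l : ℕ) (hl : 1 ≤ l)
    (A : Type*) [Ring A] [Algebra ℂ A] [StarRing A]
    (α β : A)
    (h1 : α * β = (q : ℂ) • (β * α))
    (h2 : α * star β = (q : ℂ) • (star β * α))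
    (h3 : β * star β = star β * β)
    (h4 : α * star α = star α * α + ((q : ℂ) ^ (-2 : ℤ) - 1) • (β * star β))
    (h5 : α * star α + β * star β = 1) :
    ∃ (x₁ : ℂ) (y : ℕ → ℂ),
      x₁ • (α ^ (l - 1) * (star α) ^ (l - 1))
        + ∑ p ∈ Finset.Icc 1 (l - 1), y p • ((β * star β) ^ (p - 1) * (star α * α))
      = 1 := by
  set t : A := β * star β with htdef
  have hαα : α * star α = 1 - t := eq_sub_of_add_eq h5
  have hsa : star α * α = 1 - ((q:ℂ)^(-2:ℤ)) • t := by
    have e : star α * α = (1 - t) - (((q:ℂ)^(-2:ℤ) - 1) • t) := by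
      rw [← hαα, h4]; abel
    rw [e, sub_smul, one_smul]; abel
  have hαt : α * t = ((q:ℂ)^2) • (t * α) := by
    calc α * (β * star β) = (α * β) * star β := (mul_assoc _ _ _).symm
      _ = (q:ℂ) • (β * α) * star β := by rw [h1]
      _ = (q:ℂ) • (β * (α * star β)) := by rw [smul_mul_assoc, mul_assoc]
      _ = (q:ℂ) • (β * ((q:ℂ) • (star β * α))) := by rw [h2]
      _ = ((q:ℂ)^2) • ((β * star β) * α) := by
          rw [mul_smul_comm, smul_smul, ← mul_assoc, sq]
  have hαtn : ∀ n : ℕ, α * t^n = ((q:ℂ)^(2*n)) • (t^n * α) := by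
    intro n
    induction n with
    | zero => simp
    | succ n ih =>
        calc α * t^(n+1) = (α * t^n) * t := by rw [pow_succ, mul_assoc]
          _ = ((q:ℂ)^(2*n)) • (t^n * (α * t)) := by rw [ih, smul_mul_assoc, mul_assoc]
          _ = ((q:ℂ)^(2*n)) • (t^n * (((q:ℂ)^2) • (t * α))) := by rw [hαt]
          _ = ((q:ℂ)^(2*(n+1))) • (t^(n+1) * α) := by
              rw [mul_smul_comm, smul_smul, ← pow_add, ← mul_assoc, ← pow_succ]
              ring_nf
  have hshift : ∀ p : ℂ[X],
      α * (aeval t p) = aeval t (p.comp (C ((q:ℂ)^2) * X)) * α := by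
    intro p
    induction p using Polynomial.induction_on' with
    | add p r hp hr => simp [mul_add, add_mul, add_comp, hp, hr]
    | monomial n a =>
        have hc : ((monomial n a : ℂ[X]).comp (C ((q:ℂ)^2) * X))
            = C (a * ((q:ℂ)^(2*n))) * X^n := by
          rw [← C_mul_X_pow_eq_monomial, mul_comp, pow_comp, C_comp, X_comp, mul_pow,
            ← C_pow, ← mul_assoc, ← C_mul, pow_mul]
        rw [hc, ← C_mul_X_pow_eq_monomial]
        simp only [map_mul, aeval_C, aeval_X_pow, ← Algebra.smul_def]
        rw [mul_smul_comm, hαtn n, smul_smul, smul_mul_assoc,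
          ← Algebra.smul_def, smul_smul, smul_mul_assoc]
  have hF : ∀ n : ℕ, α^n * (star α)^n
      = aeval t (∏ j ∈ Finset.range n, (1 - C ((q:ℂ)^(2*j)) * X)) := by
    intro n
    induction n with
    | zero => simp
    | succ n ih =>
        have hpoly : (∏ j ∈ Finset.range n, (1 - C ((q:ℂ)^(2*j)) * X)).comp
              (C ((q:ℂ)^2) * X) * (1 - X)
            = ∏ j ∈ Finset.range (n+1), (1 - C ((q:ℂ)^(2*j)) * X) := by
          rw [prod_comp, Finset.prod_range_succ']
          congr 1
          · refine Finset.prod_congr rfl fun j _ => ?_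
            rw [sub_comp, one_comp, mul_comp, C_comp, X_comp, ← mul_assoc, ← C_mul]
            have e : (q:ℂ)^(2*j) * (q:ℂ)^2 = (q:ℂ)^(2*(j+1)) := by ring
            rw [e]
          · simp
        rw [← hpoly, map_mul]
        have e1 : α^(n+1) * (star α)^(n+1) = α * (α^n * (star α)^n) * star α := by
          rw [pow_succ', pow_succ]; simp only [mul_assoc]
        rw [e1, ih, hshift, mul_assoc, hαα]
        congr 1
        simp
  obtain ⟨x₁, y, hxy⟩ := qsphere_aux_poly q hq (l - 1)
  refine ⟨x₁, y, ?_⟩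
  rw [hF (l - 1), hsa]
  have key := congrArg (Polynomial.aeval t) hxy
  simp only [map_add, map_mul, map_sum, map_one, map_sub, map_pow, aeval_C, aeval_X] at key
  simp only [Algebra.smul_def]
  simpa using key
end

section
/- For q ∈ (0,1) and any positive integer l, the ℤ_l-grading of O(S³_q) given by deg(α) = 1, deg(α*) = l-1, deg(β) = deg(β*) = 0 is strong: A_{l-1}·A_1 = A_0, and consequently A_g A_h = A_{g+h} for all g, h ∈ ℤ_l. -/
/-- For `q ∈ (0,1)` and a positive integer `l`, any `ℤ_l`-grading of
`O(S³_q)` with `deg α = 1`, `deg α* = l - 1 = -1`, `deg β = deg β* = 0` is strong: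
`A_{l-1} · A_1 = A_0`, and consequently `A_g A_h = A_{g+h}` for all `g, h ∈ ℤ_l`. -/
theorem quantum_sphere_strongly_graded
    (q : ℝ) (hq : q ∈ Set.Ioo (0 : ℝ) 1) (l : ℕ) (hl : 0 < l)
    (A : Type*) [Ring A] [Algebra ℂ A] [StarRing A]
    (α β : A)
    (h1 : α * β = (q : ℂ) • (β * α))
    (h2 : α * star β = (q : ℂ) • (star β * α))
    (h3 : β * star β = star β * β)
    (h4 : α * star α = star α * α + ((q : ℂ) ^ (-2 : ℤ) - 1) • (β * star β))
    (h5 : α * star α + β * star β = 1)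
    (𝒜 : ZMod l → Submodule ℂ A) [GradedAlgebra 𝒜]
    (hα : α ∈ 𝒜 1) (hα' : star α ∈ 𝒜 ((l : ZMod l) - 1))
    (hβ : β ∈ 𝒜 0) (hβ' : star β ∈ 𝒜 0)
    (hgen : Algebra.adjoin ℂ ({α, β, star α, star β} : Set A) = ⊤) :
    𝒜 ((l : ZMod l) - 1) * 𝒜 1 = 𝒜 0 ∧
      ∀ g h : ZMod l, 𝒜 g * 𝒜 h = 𝒜 (g + h) := by
  obtain ⟨hq0, hq1⟩ := hq
  set Q : ℂ := (q : ℂ) with hQdef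
  have hQ0 : Q ≠ 0 := by
    simp only [hQdef, ne_eq, Complex.ofReal_eq_zero]; exact hq0.ne'
  have hQ2 : Q ^ 2 ≠ 0 := pow_ne_zero _ hQ0
  have hzp : Q ^ (-2 : ℤ) = (Q ^ 2)⁻¹ := by rw [zpow_neg]; norm_cast
  have hQpow : ∀ m : ℕ, m ≠ 0 → Q ^ m ≠ 1 := by
    intro m hm hc
    have hql : q ^ m < 1 := pow_lt_one₀ hq0.le hq1 hm
    rw [hQdef] at hc
    have : (q : ℝ) ^ m = 1 := by exact_mod_cast hc
    linarith
  obtain ⟨t, htdef⟩ : ∃ t : A, t = β * star β := ⟨_, rfl⟩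
  rw [← htdef] at h4 h5
  -- basic relations
  have hαα' : α * star α = 1 - t := eq_sub_of_add_eq h5
  have hα'α : star α * α = 1 - (Q ^ 2)⁻¹ • t := by
    have h4' : star α * α = (1 - t) - ((Q ^ 2)⁻¹ - 1) • t := by
      rw [← hαα', ← hzp]; exact eq_sub_of_add_eq h4.symm
    rw [h4']; match_scalars <;> ring
  -- commutation of α, star α with t
  have hcα : α * t = (Q ^ 2) • (t * α) := by
    have e : (1 - t) * α = α * (1 - (Q ^ 2)⁻¹ • t) := by
      rw [← hαα', ← hα'α, mul_assoc]
    rw [sub_mul, one_mul, mul_sub, mul_one, mul_smul_comm] at e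
    have e3 : t * α = (Q ^ 2)⁻¹ • (α * t) := sub_right_inj.mp e
    rw [e3, smul_smul, mul_inv_cancel₀ hQ2, one_smul]
  have hcα' : star α * t = (Q ^ 2)⁻¹ • (t * star α) := by
    have e : (1 - (Q ^ 2)⁻¹ • t) * star α = star α * (1 - t) := by
      rw [← hαα', ← hα'α, mul_assoc]
    rw [sub_mul, one_mul, smul_mul_assoc, mul_sub, mul_one] at e
    exact (sub_right_inj.mp e).symm
  have hpowt : ∀ k : ℕ, α ^ k * t = ((Q ^ 2) ^ k) • (t * α ^ k) := by
    intro k; induction k with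
    | zero => simp
    | succ k ih =>
      calc α ^ (k + 1) * t = α ^ k * (α * t) := by rw [pow_succ, mul_assoc]
        _ = (Q ^ 2) • ((α ^ k * t) * α) := by rw [hcα, mul_smul_comm, mul_assoc]
        _ = (Q ^ 2) • ((Q ^ 2) ^ k • ((t * α ^ k) * α)) := by rw [ih, smul_mul_assoc]
        _ = ((Q ^ 2) ^ (k + 1)) • (t * α ^ (k + 1)) := by
            rw [smul_smul, ← pow_succ' (Q ^ 2) k, pow_succ α k, ← mul_assoc]
  have hpowt' : ∀ k : ℕ, (star α) ^ k * t = (((Q ^ 2)⁻¹) ^ k) • (t * (star α) ^ k) := by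
    intro k; induction k with
    | zero => simp
    | succ k ih =>
      calc (star α) ^ (k + 1) * t = (star α) ^ k * (star α * t) := by rw [pow_succ, mul_assoc]
        _ = (Q ^ 2)⁻¹ • (((star α) ^ k * t) * star α) := by rw [hcα', mul_smul_comm, mul_assoc]
        _ = (Q ^ 2)⁻¹ • (((Q ^ 2)⁻¹) ^ k • ((t * (star α) ^ k) * star α)) := by
            rw [ih, smul_mul_assoc]
        _ = (((Q ^ 2)⁻¹) ^ (k + 1)) • (t * (star α) ^ (k + 1)) := by
            rw [smul_smul, ← pow_succ' ((Q ^ 2)⁻¹) k, pow_succ (star α) k, ← mul_assoc]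
  -- degree bookkeeping
  have hl0 : (l : ZMod l) = 0 := ZMod.natCast_self l
  have hα'neg : star α ∈ 𝒜 (-1 : ZMod l) := by rwa [hl0, zero_sub] at hα'
  have hca : ((l - 1 : ℕ) : ZMod l) = (-1 : ZMod l) := by
    rw [Nat.cast_sub hl, Nat.cast_one, hl0, zero_sub]
  have hpowα : α ^ (l - 1) ∈ 𝒜 (-1 : ZMod l) := by
    have := SetLike.pow_mem_graded (l - 1) hα
    rwa [nsmul_eq_mul, mul_one, hca] at this
  have hpowα' : (star α) ^ (l - 1) ∈ 𝒜 (1 : ZMod l) := by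
    have := SetLike.pow_mem_graded (l - 1) hα'neg
    rwa [nsmul_eq_mul, mul_neg, mul_one, hca, neg_neg] at this
  have ht0 : t ∈ 𝒜 (0 : ZMod l) := by
    have := SetLike.mul_mem_graded hβ hβ'
    rwa [add_zero, ← htdef] at this
  -- the two key submodules
  set M : Submodule ℂ A := 𝒜 (-1 : ZMod l) * 𝒜 (1 : ZMod l) with hMdef
  set M' : Submodule ℂ A := 𝒜 (1 : ZMod l) * 𝒜 (-1 : ZMod l) with hM'def
  have hMmul : ∀ m ∈ M, t * m ∈ M := by
    intro m hm
    refine Submodule.mul_induction_on (C := fun z => t * z ∈ M) hm (fun a ha b hb => ?_)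
      (fun x y hx hy => ?_)
    · show t * (a * b) ∈ M
      rw [← mul_assoc]
      refine Submodule.mul_mem_mul ?_ hb
      have := SetLike.mul_mem_graded ht0 ha; rwa [zero_add] at this
    · show t * (x + y) ∈ M
      rw [mul_add]; exact add_mem hx hy
  have hM'mul : ∀ m ∈ M', t * m ∈ M' := by
    intro m hm
    refine Submodule.mul_induction_on (C := fun z => t * z ∈ M') hm (fun a ha b hb => ?_)
      (fun x y hx hy => ?_)
    · show t * (a * b) ∈ M'
      rw [← mul_assoc]
      refine Submodule.mul_mem_mul ?_ hb
      have := SetLike.mul_mem_graded ht0 ha; rwa [zero_add] at this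
    · show t * (x + y) ∈ M'
      rw [mul_add]; exact add_mem hx hy
  have hα'αM : star α * α ∈ M := Submodule.mul_mem_mul hα'neg hα
  have hαα'M : α * star α ∈ M' := Submodule.mul_mem_mul hα hα'neg
  have htM : t - (Q ^ 2) • (1 : A) ∈ M := by
    have he : t - (Q ^ 2) • (1 : A) = (-(Q ^ 2)) • (star α * α) := by
      rw [hα'α, smul_sub, smul_smul, neg_mul, mul_inv_cancel₀ hQ2, neg_smul, neg_smul,
        one_smul, sub_neg_eq_add, neg_add_eq_sub]
    rw [he]; exact Submodule.smul_mem _ _ hα'αM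
  have htM' : t - (1 : ℂ) • (1 : A) ∈ M' := by
    have he : t - (1 : ℂ) • (1 : A) = (-1 : ℂ) • (α * star α) := by
      rw [hαα']; match_scalars <;> ring
    rw [he]; exact Submodule.smul_mem _ _ hαα'M
  -- key inductions
  have key : ∀ k : ℕ,
      α ^ k * (star α) ^ k - (∏ j ∈ Finset.range k, (1 - Q ^ (2 * (j + 1)))) • (1 : A) ∈ M := by
    intro k; induction k with
    | zero => simpa using zero_mem M
    | succ k ih =>
      have e : α ^ (k + 1) * (star α) ^ (k + 1)
          = α ^ k * (star α) ^ k - ((Q ^ 2) ^ k) • (t * (α ^ k * (star α) ^ k)) := by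
        calc α ^ (k + 1) * (star α) ^ (k + 1)
            = α ^ k * (α * star α) * (star α) ^ k := by
              rw [pow_succ, pow_succ']; simp only [mul_assoc]
          _ = α ^ k * (star α) ^ k - (α ^ k * t) * (star α) ^ k := by
              rw [hαα', mul_sub, mul_one, sub_mul, mul_assoc]
          _ = α ^ k * (star α) ^ k - ((Q ^ 2) ^ k) • (t * (α ^ k * (star α) ^ k)) := by
              rw [hpowt k, smul_mul_assoc, mul_assoc]
      set X := α ^ k * (star α) ^ k with hXdef
      set c := ∏ j ∈ Finset.range k, (1 - Q ^ (2 * (j + 1))) with hcdef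
      have hm2 : t * X - c • t ∈ M := by
        have := hMmul _ ih
        rwa [mul_sub, mul_smul_comm, mul_one] at this
      have final : α ^ (k + 1) * (star α) ^ (k + 1)
            - (∏ j ∈ Finset.range (k + 1), (1 - Q ^ (2 * (j + 1)))) • (1 : A)
          = (X - c • 1) - ((Q ^ 2) ^ k) • (t * X - c • t)
            - (((Q ^ 2) ^ k) * c) • (t - (Q ^ 2) • 1) := by
        rw [e, Finset.prod_range_succ, ← hcdef]
        match_scalars <;> ring
      rw [final]
      exact sub_mem (sub_mem ih (Submodule.smul_mem _ _ hm2)) (Submodule.smul_mem _ _ htM)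
  have key' : ∀ k : ℕ,
      (star α) ^ k * α ^ k
        - (∏ j ∈ Finset.range k, (1 - ((Q ^ 2)⁻¹) ^ (j + 1))) • (1 : A) ∈ M' := by
    intro k; induction k with
    | zero => simpa using zero_mem M'
    | succ k ih =>
      have e : (star α) ^ (k + 1) * α ^ (k + 1)
          = (star α) ^ k * α ^ k
            - (((Q ^ 2)⁻¹) ^ (k + 1)) • (t * ((star α) ^ k * α ^ k)) := by
        calc (star α) ^ (k + 1) * α ^ (k + 1)
            = (star α) ^ k * (star α * α) * α ^ k := by
              rw [pow_succ, pow_succ']; simp only [mul_assoc]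
          _ = (star α) ^ k * α ^ k - (Q ^ 2)⁻¹ • (((star α) ^ k * t) * α ^ k) := by
              rw [hα'α, mul_sub, mul_one, mul_smul_comm, sub_mul, smul_mul_assoc, mul_assoc]
          _ = (star α) ^ k * α ^ k
              - (((Q ^ 2)⁻¹) ^ (k + 1)) • (t * ((star α) ^ k * α ^ k)) := by
              rw [hpowt' k, smul_mul_assoc, smul_smul, ← pow_succ' ((Q ^ 2)⁻¹) k, mul_assoc]
      set X := (star α) ^ k * α ^ k with hXdef
      set c := ∏ j ∈ Finset.range k, (1 - ((Q ^ 2)⁻¹) ^ (j + 1)) with hcdef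
      have hm2 : t * X - c • t ∈ M' := by
        have := hM'mul _ ih
        rwa [mul_sub, mul_smul_comm, mul_one] at this
      have final : (star α) ^ (k + 1) * α ^ (k + 1)
            - (∏ j ∈ Finset.range (k + 1), (1 - ((Q ^ 2)⁻¹) ^ (j + 1))) • (1 : A)
          = (X - c • 1) - (((Q ^ 2)⁻¹) ^ (k + 1)) • (t * X - c • t)
            - ((((Q ^ 2)⁻¹) ^ (k + 1)) * c) • (t - (1 : ℂ) • 1) := by
        rw [e, Finset.prod_range_succ, ← hcdef]
        match_scalars <;> ring
      rw [final]
      exact sub_mem (sub_mem ih (Submodule.smul_mem _ _ hm2)) (Submodule.smul_mem _ _ htM')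
  -- `1 ∈ M` and `1 ∈ M'`
  have honeM : (1 : A) ∈ M := by
    have hkey := key (l - 1)
    have hpm : α ^ (l - 1) * (star α) ^ (l - 1) ∈ M := Submodule.mul_mem_mul hpowα hpowα'
    have hcl : (∏ j ∈ Finset.range (l - 1), (1 - Q ^ (2 * (j + 1)))) ≠ 0 := by
      rw [Finset.prod_ne_zero_iff]
      intro j _ hc
      exact hQpow (2 * (j + 1)) (by omega) (sub_eq_zero.mp hc).symm
    have hsm : (∏ j ∈ Finset.range (l - 1), (1 - Q ^ (2 * (j + 1)))) • (1 : A) ∈ M := by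
      have := sub_mem hpm hkey
      rwa [sub_sub_cancel] at this
    have := Submodule.smul_mem M (∏ j ∈ Finset.range (l - 1), (1 - Q ^ (2 * (j + 1))))⁻¹ hsm
    rwa [smul_smul, inv_mul_cancel₀ hcl, one_smul] at this
  have honeM' : (1 : A) ∈ M' := by
    have hkey := key' (l - 1)
    have hpm : (star α) ^ (l - 1) * α ^ (l - 1) ∈ M' := Submodule.mul_mem_mul hpowα' hpowα
    have hcl : (∏ j ∈ Finset.range (l - 1), (1 - ((Q ^ 2)⁻¹) ^ (j + 1))) ≠ 0 := by
      rw [Finset.prod_ne_zero_iff]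
      intro j _ hc
      have h1 : ((Q ^ 2)⁻¹) ^ (j + 1) = 1 := (sub_eq_zero.mp hc).symm
      rw [inv_pow, inv_eq_one, ← pow_mul] at h1
      exact hQpow (2 * (j + 1)) (by omega) h1
    have hsm : (∏ j ∈ Finset.range (l - 1), (1 - ((Q ^ 2)⁻¹) ^ (j + 1))) • (1 : A) ∈ M' := by
      have := sub_mem hpm hkey
      rwa [sub_sub_cancel] at this
    have := Submodule.smul_mem M'
      (∏ j ∈ Finset.range (l - 1), (1 - ((Q ^ 2)⁻¹) ^ (j + 1)))⁻¹ hsm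
    rwa [smul_smul, inv_mul_cancel₀ hcl, one_smul] at this
  -- propagate to all degrees
  have ins : ∀ (g h g' h' : ZMod l) (x y : A), x ∈ 𝒜 g → y ∈ 𝒜 h →
      ∀ z ∈ 𝒜 g' * 𝒜 h', x * z * y ∈ 𝒜 (g + g') * 𝒜 (h' + h) := by
    intro g h g' h' x y hx hy z hz
    refine Submodule.mul_induction_on (C := fun z => x * z * y ∈ 𝒜 (g + g') * 𝒜 (h' + h)) hz
      (fun m hm n hn => ?_) (fun a b ha hb => ?_)
    · show x * (m * n) * y ∈ 𝒜 (g + g') * 𝒜 (h' + h)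
      have he : x * (m * n) * y = (x * m) * (n * y) := by simp only [mul_assoc]
      rw [he]
      exact Submodule.mul_mem_mul (SetLike.mul_mem_graded hx hm) (SetLike.mul_mem_graded hn hy)
    · show x * (a + b) * y ∈ 𝒜 (g + g') * 𝒜 (h' + h)
      have he : x * (a + b) * y = x * a * y + x * b * y := by noncomm_ring
      rw [he]; exact add_mem ha hb
  have oneg : ∀ n : ℕ, (1 : A) ∈ 𝒜 ((n : ZMod l)) * 𝒜 (-(n : ZMod l)) ∧
      (1 : A) ∈ 𝒜 (-(n : ZMod l)) * 𝒜 ((n : ZMod l)) := by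
    intro n; induction n with
    | zero =>
      constructor <;>
        simpa using Submodule.mul_mem_mul (SetLike.one_mem_graded 𝒜) (SetLike.one_mem_graded 𝒜)
    | succ n ih =>
      constructor
      · have hle : 𝒜 (1 : ZMod l) * 𝒜 (-1 : ZMod l)
            ≤ 𝒜 ((1 : ZMod l) + n) * 𝒜 (-(n : ZMod l) + -1) := by
          rw [Submodule.mul_le]; intro a ha b hb
          have := ins 1 (-1) n (-(n : ZMod l)) a b ha hb 1 ih.1
          rwa [mul_one] at this
        have h1 := hle honeM'
        rw [show (-((n + 1 : ℕ) : ZMod l)) = -(n : ZMod l) + -1 by push_cast; ring,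
          show ((n + 1 : ℕ) : ZMod l) = (1 : ZMod l) + n by push_cast; ring]
        exact h1
      · have hle : 𝒜 (-1 : ZMod l) * 𝒜 (1 : ZMod l)
            ≤ 𝒜 ((-1 : ZMod l) + -n) * 𝒜 ((n : ZMod l) + 1) := by
          rw [Submodule.mul_le]; intro a ha b hb
          have := ins (-1) 1 (-(n : ZMod l)) n a b ha hb 1 ih.2
          rwa [mul_one] at this
        have h1 := hle honeM
        rw [show (-((n + 1 : ℕ) : ZMod l)) = (-1 : ZMod l) + -n by push_cast; ring,
          show ((n + 1 : ℕ) : ZMod l) = (n : ZMod l) + 1 by push_cast; ring]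
        exact h1
  haveI : NeZero l := ⟨hl.ne'⟩
  have onegg : ∀ g : ZMod l, (1 : A) ∈ 𝒜 (-g) * 𝒜 g := by
    intro g
    have hg : ((g.val : ℕ) : ZMod l) = g := by simp [ZMod.natCast_val, ZMod.cast_id]
    rw [← hg]; exact (oneg g.val).2
  have main : ∀ g h : ZMod l, 𝒜 g * 𝒜 h = 𝒜 (g + h) := by
    intro g h
    apply le_antisymm
    · rw [Submodule.mul_le]; intro a ha b hb; exact SetLike.mul_mem_graded ha hb
    · intro x hx
      have h1 := onegg h
      have hx1 : x * 1 ∈ 𝒜 g * 𝒜 h := by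
        refine Submodule.mul_induction_on (C := fun z => x * z ∈ 𝒜 g * 𝒜 h) h1
          (fun m hm n hn => ?_) (fun a b ha hb => ?_)
        · show x * (m * n) ∈ 𝒜 g * 𝒜 h
          rw [← mul_assoc]
          refine Submodule.mul_mem_mul ?_ hn
          have := SetLike.mul_mem_graded hx hm
          rwa [show g + h + -h = g by ring] at this
        · show x * (a + b) ∈ 𝒜 g * 𝒜 h
          rw [mul_add]; exact add_mem ha hb
      rwa [mul_one] at hx1
  refine ⟨?_, main⟩
  rw [hl0, zero_sub]
  have := main (-1) 1
  rwa [neg_add_cancel] at this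
end

section
/- For q ∈ (0,1) and l ≥ 1, the quantum lens space algebra O(L_q(l;1,l)) embeds into O(S³_q) as a *-subalgebra via c ↦ α^l, d ↦ β; i.e., the elements α^l and β of O(S³_q) satisfy the defining relations of O(L_q(l;1,l)). -/
/-- For `q ∈ (0,1)` and `l ≥ 1`, the elements `c = α^l` and `d = β` of
`O(S³_q)` satisfy the defining relations of the quantum lens space algebra `O(L_q(l;1,l))`:
`cd = q^l dc`, `cd* = q^l d*c`, `dd* = d*d`, `cc* = (dd*;q²)_l`,
`c*c = (q^{-2}dd*;q^{-2})_l`.  (Products of commuting factors are written as ordered list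
products.) -/
theorem quantum_lens_space_embeds
    (q : ℝ) (hq : q ∈ Set.Ioo (0 : ℝ) 1) (l : ℕ) (hl : 1 ≤ l)
    (A : Type*) [Ring A] [Algebra ℂ A] [StarRing A]
    (α β : A)
    (h1 : α * β = (q : ℂ) • (β * α))
    (h2 : α * star β = (q : ℂ) • (star β * α))
    (h3 : β * star β = star β * β)
    (h4 : α * star α = star α * α + ((q : ℂ) ^ (-2 : ℤ) - 1) • (β * star β))
    (h5 : α * star α + β * star β = 1) :
    α ^ l * β = (q : ℂ) ^ l • (β * α ^ l) ∧
    α ^ l * star β = (q : ℂ) ^ l • (star β * α ^ l) ∧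
    β * star β = star β * β ∧
    α ^ l * star (α ^ l)
      = ((List.range l).map
          (fun m => (1 : A) - ((q : ℂ) ^ (2 * m)) • (β * star β))).prod ∧
    star (α ^ l) * α ^ l
      = ((List.range l).map
          (fun m => (1 : A) - ((q : ℂ) ^ (-(2 * (m + 1)) : ℤ)) • (β * star β))).prod := by
  obtain ⟨hq0, hq1⟩ := hq
  have hqc : (q : ℂ) ≠ 0 := by exact_mod_cast ne_of_gt hq0
  set B : A := β * star β with hB
  have hαB : α * B = ((q : ℂ) ^ 2) • (B * α) := by
    calc α * B = (α * β) * star β := by rw [hB, mul_assoc]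
    _ = (q : ℂ) • (β * (α * star β)) := by rw [h1, smul_mul_assoc, mul_assoc]
    _ = (q : ℂ) • (β * ((q : ℂ) • (star β * α))) := by rw [h2]
    _ = ((q : ℂ) * (q : ℂ)) • (β * (star β * α)) := by rw [mul_smul_comm, smul_smul]
    _ = ((q : ℂ) ^ 2) • (B * α) := by rw [sq, hB, mul_assoc]
  have hαsα : α * star α = 1 - B := by
    rw [← h5]; abel
  have hsαα : star α * α = 1 - ((q : ℂ) ^ (-2 : ℤ)) • B := by
    have h4' := h4
    rw [hαsα] at h4'
    have h' : star α * α = 1 - B - ((q : ℂ) ^ (-2 : ℤ) - 1) • B := by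
      rw [h4', add_sub_cancel_right]
    rw [h', sub_smul, one_smul]
    abel
  have hB5 : B = 1 - α * star α := by rw [← h5]; abel
  have hsαB : star α * B = ((q : ℂ) ^ (-2 : ℤ)) • (B * star α) := by
    calc star α * B = star α * (1 - α * star α) := by rw [← hB5]
    _ = star α - (star α * α) * star α := by noncomm_ring
    _ = star α - (1 - ((q : ℂ) ^ (-2 : ℤ)) • B) * star α := by rw [hsαα]
    _ = ((q : ℂ) ^ (-2 : ℤ)) • (B * star α) := by
        rw [sub_mul, one_mul, smul_mul_assoc]; abel
  have hp1 : ∀ n : ℕ, α ^ n * β = (q : ℂ) ^ n • (β * α ^ n) := by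
    intro n
    induction n with
    | zero => simp
    | succ n ih =>
      rw [pow_succ, mul_assoc, h1, mul_smul_comm, ← mul_assoc, ih, smul_mul_assoc,
        smul_smul, mul_assoc, ← pow_succ, ← pow_succ']
  have hp2 : ∀ n : ℕ, α ^ n * star β = (q : ℂ) ^ n • (star β * α ^ n) := by
    intro n
    induction n with
    | zero => simp
    | succ n ih =>
      rw [pow_succ, mul_assoc, h2, mul_smul_comm, ← mul_assoc, ih, smul_mul_assoc,
        smul_smul, mul_assoc, ← pow_succ, ← pow_succ']
  have hpB : ∀ n : ℕ, α ^ n * B = ((q : ℂ) ^ (2 * n)) • (B * α ^ n) := by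
    intro n
    induction n with
    | zero => simp
    | succ n ih =>
      rw [pow_succ, mul_assoc, hαB, mul_smul_comm, ← mul_assoc, ih, smul_mul_assoc,
        smul_smul, mul_assoc, ← pow_succ]
      congr 1
      ring
  have hpsB : ∀ n : ℕ, (star α) ^ n * B = ((q : ℂ) ^ (-(2 * (n : ℤ)))) • (B * (star α) ^ n) := by
    intro n
    induction n with
    | zero => simp
    | succ n ih =>
      rw [pow_succ, mul_assoc, hsαB, mul_smul_comm, ← mul_assoc, ih, smul_mul_assoc,
        smul_smul, mul_assoc, ← pow_succ, ← zpow_add₀ hqc]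
      congr 2
      push_cast
      ring
  set P : ℕ → A := fun n => ((List.range n).map
      (fun m => (1 : A) - ((q : ℂ) ^ (2 * m)) • B)).prod with hP
  set Q : ℕ → A := fun n => ((List.range n).map
      (fun m => (1 : A) - ((q : ℂ) ^ (-(2 * (m + 1)) : ℤ)) • B)).prod with hQ
  have hPsucc : ∀ n : ℕ, P (n + 1) = P n * ((1 : A) - ((q : ℂ) ^ (2 * n)) • B) := by
    intro n; simp [hP, List.range_succ]
  have hQsucc : ∀ n : ℕ, Q (n + 1)
      = Q n * ((1 : A) - ((q : ℂ) ^ (-(2 * ((n : ℤ) + 1)))) • B) := by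
    intro n; simp [hQ, List.range_succ]
  have hPB : ∀ n : ℕ, B * P n = P n * B := by
    intro n
    induction n with
    | zero => simp [hP]
    | succ n ih =>
      have hc : B * ((1 : A) - ((q : ℂ) ^ (2 * n)) • B)
          = ((1 : A) - ((q : ℂ) ^ (2 * n)) • B) * B := by
        simp [mul_sub, sub_mul, mul_smul_comm, smul_mul_assoc]
      rw [hPsucc, ← mul_assoc, ih, mul_assoc (P n), hc, ← mul_assoc]
  have hQB : ∀ n : ℕ, B * Q n = Q n * B := by
    intro n
    induction n with
    | zero => simp [hQ]
    | succ n ih =>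
      have hc : B * ((1 : A) - ((q : ℂ) ^ (-(2 * ((n : ℤ) + 1)))) • B)
          = ((1 : A) - ((q : ℂ) ^ (-(2 * ((n : ℤ) + 1)))) • B) * B := by
        simp [mul_sub, sub_mul, mul_smul_comm, smul_mul_assoc]
      rw [hQsucc, ← mul_assoc, ih, mul_assoc (Q n), hc, ← mul_assoc]
  have main4 : ∀ n : ℕ, α ^ n * (star α) ^ n = P n := by
    intro n
    induction n with
    | zero => simp [hP]
    | succ n ih =>
      calc α ^ (n + 1) * (star α) ^ (n + 1)
          = α ^ n * (α * star α) * (star α) ^ n := by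
            rw [pow_succ, pow_succ']; noncomm_ring
        _ = α ^ n * (star α) ^ n - (α ^ n * B) * (star α) ^ n := by
            rw [hαsα]; noncomm_ring
        _ = P n - ((q : ℂ) ^ (2 * n)) • (P n * B) := by
            rw [ih, hpB n, smul_mul_assoc, mul_assoc B, ih, hPB n]
        _ = P (n + 1) := by
            rw [hPsucc, mul_sub, mul_one, mul_smul_comm]
  have main5 : ∀ n : ℕ, (star α) ^ n * α ^ n = Q n := by
    intro n
    induction n with
    | zero => simp [hQ]
    | succ n ih =>
      calc (star α) ^ (n + 1) * α ^ (n + 1)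
          = (star α) ^ n * (star α * α) * α ^ n := by
            rw [pow_succ, pow_succ']; noncomm_ring
        _ = (star α) ^ n * α ^ n
            - ((q : ℂ) ^ (-2 : ℤ)) • (((star α) ^ n * B) * α ^ n) := by
            rw [hsαα, mul_sub, mul_one, sub_mul, mul_smul_comm, smul_mul_assoc, mul_assoc,
              ← mul_assoc ((star α) ^ n) B]
        _ = Q n - ((q : ℂ) ^ (-(2 * ((n : ℤ) + 1)))) • (Q n * B) := by
            rw [ih, hpsB n, smul_mul_assoc, mul_assoc B, ih, hQB n, smul_smul, ← zpow_add₀ hqc]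
            congr 2
            ring
        _ = Q (n + 1) := by
            rw [hQsucc, mul_sub, mul_one, mul_smul_comm]
  refine ⟨hp1 l, hp2 l, h3, ?_, ?_⟩
  · rw [star_pow]; exact main4 l
  · rw [star_pow]; exact main5 l
end

section
/- For q ∈ (0,1) and l ≥ 1 odd, the quantum teardrop relations hold for the elements a = dd*, b = cd in O(L_q(l;1,l)): a* = a, ab = q^{-2l}ba, bb* = q^{2l}a(a;q²)_l, b*b = a(q^{-2}a;q^{-2})_l. That is, O(WP_q(1,l)) embeds into O(L_q(l;1,l)) via a ↦ dd*, b ↦ cd. -/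
/-!
Writing `a = d d*` and `b = c d`, the scalar factors come from moving `c` past `d` or `d*`,
each move costing a factor `q^l`: `b a = q^{2l} a b` and `b b* = q^{2l} (d d*)(c c*)`.
For `b* b = d* (c* c) d`, the factor `c* c` is a polynomial in the normal element `d d*`,
hence commutes with `d*`, and `d* (c* c) d = (c* c) (d* d) = a (c* c)`.
-/

section

variable {R A : Type*} [CommSemiring R] [Ring A] [Algebra R A]

theorem Commute.list_prod_map_one_sub_smul_left {x y : A} (h : Commute x y) {ι : Type*}
    (L : List ι) (f : ι → R) : Commute (L.map fun i => 1 - f i • x).prod y :=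
  Commute.list_prod_left _ _ fun z hz => by
    obtain ⟨i, -, rfl⟩ := List.mem_map.mp hz
    exact (Commute.one_left y).sub_left (h.smul_left _)

variable {s : R} {c d e : A}

theorem mul_mul_eq_sq_smul_mul_mul (hcd : c * d = s • (d * c)) (hce : c * e = s • (e * c))
    (hde : Commute d e) : (c * d) * (d * e) = s ^ 2 • ((d * e) * (c * d)) := by
  calc (c * d) * (d * e) = s • (d * (c * e) * d) := by
        rw [hcd, smul_mul_assoc, hde.eq]; simp only [mul_assoc]
    _ = s ^ 2 • ((d * e) * (c * d)) := by
        rw [hce, mul_smul_comm, smul_mul_assoc, smul_smul, ← sq]; simp only [mul_assoc]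

theorem mul_mul_eq_sq_smul_mul_mul_mul (hcd : c * d = s • (d * c))
    (hce : c * e = s • (e * c)) (hde : Commute d e) (c' : A) :
    (c * d) * (e * c') = s ^ 2 • ((d * e) * (c * c')) := by
  calc (c * d) * (e * c') = (c * e) * d * c' := by
        rw [mul_assoc c e, ← hde.eq]; simp only [mul_assoc]
    _ = s ^ 2 • ((e * d) * (c * c')) := by
        rw [hce, smul_mul_assoc, smul_mul_assoc, mul_assoc e, hcd, mul_smul_comm, smul_mul_assoc,
          smul_smul, ← sq]; simp only [mul_assoc]
    _ = s ^ 2 • ((d * e) * (c * c')) := by rw [hde.eq]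

end

theorem quantum_teardrop_embeds_general
    (q : ℝ) (hq : q ∈ Set.Ioo (0 : ℝ) 1) (l : ℕ)
    (A : Type*) [Ring A] [Algebra ℂ A] [StarRing A]
    (c d : A)
    (h1 : c * d = (q : ℂ) ^ l • (d * c))
    (h2 : c * star d = (q : ℂ) ^ l • (star d * c))
    (h3 : d * star d = star d * d)
    (h4 : c * star c
      = ((List.range l).map
          (fun m => (1 : A) - ((q : ℂ) ^ (2 * m)) • (d * star d))).prod)
    (h5 : star c * c
      = ((List.range l).map
          (fun m => (1 : A) - ((q : ℂ) ^ (-(2 * (m + 1)) : ℤ)) • (d * star d))).prod) :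
    star (d * star d) = d * star d ∧
    (d * star d) * (c * d) = (q : ℂ) ^ (-(2 * l) : ℤ) • ((c * d) * (d * star d)) ∧
    (c * d) * star (c * d)
      = (q : ℂ) ^ (2 * l) • ((d * star d) *
          ((List.range l).map
            (fun m => (1 : A) - ((q : ℂ) ^ (2 * m)) • (d * star d))).prod) ∧
    star (c * d) * (c * d)
      = (d * star d) *
          ((List.range l).map
            (fun m => (1 : A) - ((q : ℂ) ^ (-(2 * (m + 1)) : ℤ)) • (d * star d))).prod := by
  have hq0 : (q : ℂ) ≠ 0 := by exact_mod_cast hq.1.ne'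
  have hnormal : Commute d (star d) := h3
  refine ⟨by rw [star_mul, star_star], ?_, ?_, ?_⟩
  · have hscalar : (q : ℂ) ^ (-(2 * l) : ℤ) * ((q : ℂ) ^ l) ^ 2 = 1 := by
      rw [← pow_mul, ← zpow_natCast, ← zpow_add₀ hq0]; push_cast; ring_nf; exact zpow_zero _
    rw [mul_mul_eq_sq_smul_mul_mul h1 h2 hnormal, smul_smul, hscalar, one_smul]
  · rw [star_mul, mul_mul_eq_sq_smul_mul_mul_mul h1 h2 hnormal, h4, ← pow_mul, mul_comm l 2]
  · set a := d * star d
    set Q := ((List.range l).map fun m => (1 : A) - ((q : ℂ) ^ (-(2 * (m + 1)) : ℤ)) • a).prod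
    have hQd : Commute Q (star d) :=
      (hnormal.mul_left (Commute.refl _)).list_prod_map_one_sub_smul_left _ _
    have hQa : Commute Q a := (Commute.refl a).list_prod_map_one_sub_smul_left _ _
    calc star (c * d) * (c * d) = star d * (star c * c) * d := by
          rw [star_mul]; simp only [mul_assoc]
      _ = Q * a := by rw [h5, ← hQd.eq, mul_assoc, ← h3]
      _ = a * Q := hQa.eq

/-- For `q ∈ (0,1)` and odd `l ≥ 1`, the elements `a = dd*` and `b = cd`
of the quantum lens space algebra `O(L_q(l;1,l))` satisfy the defining relations of the
quantum teardrop algebra `O(WP_q(1,l))`: `a* = a`, `ab = q^{-2l} ba`,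
`bb* = q^{2l} a (a;q²)_l`, `b*b = a (q^{-2}a;q^{-2})_l`. -/
theorem quantum_teardrop_embeds
    (q : ℝ) (hq : q ∈ Set.Ioo (0 : ℝ) 1) (l : ℕ) (hl : 1 ≤ l) (hodd : Odd l)
    (A : Type*) [Ring A] [Algebra ℂ A] [StarRing A]
    (c d : A)
    (h1 : c * d = (q : ℂ) ^ l • (d * c))
    (h2 : c * star d = (q : ℂ) ^ l • (star d * c))
    (h3 : d * star d = star d * d)
    (h4 : c * star c
      = ((List.range l).map
          (fun m => (1 : A) - ((q : ℂ) ^ (2 * m)) • (d * star d))).prod)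
    (h5 : star c * c
      = ((List.range l).map
          (fun m => (1 : A) - ((q : ℂ) ^ (-(2 * (m + 1)) : ℤ)) • (d * star d))).prod) :
    star (d * star d) = d * star d ∧
    (d * star d) * (c * d) = (q : ℂ) ^ (-(2 * l) : ℤ) • ((c * d) * (d * star d)) ∧
    (c * d) * star (c * d)
      = (q : ℂ) ^ (2 * l) • ((d * star d) *
          ((List.range l).map
            (fun m => (1 : A) - ((q : ℂ) ^ (2 * m)) • (d * star d))).prod) ∧
    star (c * d) * (c * d)
      = (d * star d) *
          ((List.range l).map
            (fun m => (1 : A) - ((q : ℂ) ^ (-(2 * (m + 1)) : ℤ)) • (d * star d))).prod :=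
  quantum_teardrop_embeds_general q hq l A c d h1 h2 h3 h4 h5
end
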